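/- If T is a tree on n ≥ 7 vertices with maximum degree Δ(T) ≤ n−4, then ρ_ABC(T) ≤ √(n−4). -/

import Mathlib

open scoped Classical
open Finset Matrix

noncomputable def ABCMatrix {n : ℕ} (G : SimpleGraph (Fin n)) : Matrix (Fin n) (Fin n) ℝ :=
  fun i j => if G.Adj i j then
    Real.sqrt (((G.degree i : ℝ) + (G.degree j : ℝ) - 2) / ((G.degree i : ℝ) * (G.degree j : ℝ)))
  else 0

noncomputable def rhoABC {n : ℕ} (G : SimpleGraph (Fin n)) : ℝ :=
  sSup {r : ℝ | ∃ x : Fin n → ℝ, ∑ i, x i ^ 2 = 1 ∧ r = x ⬝ᵥ (ABCMatrix G).mulVec x}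

/-!
Weighting the quadratic form of the (nonnegative, symmetric) ABC matrix by `w = (√dᵥ)ᵥ` and
applying `2xᵢxⱼ ≤ (wⱼ/wᵢ)xᵢ² + (wᵢ/wⱼ)xⱼ²` bounds `ρ_ABC` by any `c` with `A w ≤ c w`.
Row `i` of `A w` is `(∑_{j ~ i} √(dᵢ + dⱼ - 2)) / √dᵢ`, and Cauchy–Schwarz turns
`A w ≤ √(n-4) w` into `dᵢ(dᵢ - 2) + ∑_{j ~ i} dⱼ ≤ dᵢ(n-4)`. In a tree every vertex outside the
closed neighbourhood of `i` has degree at least one, so `∑_{j ~ i} dⱼ ≤ n - 1`; this together with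
`dⱼ ≤ Δ ≤ n - 4` gives the inequality, for `dᵢ = 1` and `2 ≤ dᵢ ≤ n - 4` separately.
-/

theorem Matrix.dotProduct_mulVec_le_of_mulVec_le {ι : Type*} [Fintype ι] {M : Matrix ι ι ℝ}
    (hM : M.IsSymm) (hM0 : ∀ i j, 0 ≤ M i j) {w : ι → ℝ} (hw : ∀ i, 0 < w i) {c : ℝ}
    (hMw : ∀ i, (M *ᵥ w) i ≤ c * w i) (x : ι → ℝ) :
    x ⬝ᵥ M *ᵥ x ≤ c * ∑ i, x i ^ 2 := by
  have amgm : ∀ i j, 2 * (x i * x j) ≤ w j / w i * x i ^ 2 + w i / w j * x j ^ 2 := by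
    intro i j
    have hi := hw i
    have hj := hw j
    rw [← sub_nonneg]
    have : w j / w i * x i ^ 2 + w i / w j * x j ^ 2 - 2 * (x i * x j)
        = (w j * x i - w i * x j) ^ 2 / (w i * w j) := by
      field_simp
      ring
    rw [this]
    positivity
  set S := ∑ i, ∑ j, M i j * (w j / w i * x i ^ 2)
  have hswap : ∑ i, ∑ j, M i j * (w i / w j * x j ^ 2) = S := by
    rw [Finset.sum_comm]
    simp only [hM.apply, S]
  have hquad : x ⬝ᵥ M *ᵥ x ≤ S := by
    have : 2 * (x ⬝ᵥ M *ᵥ x) ≤ 2 * S := calc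
      2 * (x ⬝ᵥ M *ᵥ x) = ∑ i, ∑ j, M i j * (2 * (x i * x j)) := by
        simp only [dotProduct, mulVec, Finset.mul_sum]
        exact Finset.sum_congr rfl fun i _ => Finset.sum_congr rfl fun j _ => by ring
      _ ≤ ∑ i, ∑ j, M i j * (w j / w i * x i ^ 2 + w i / w j * x j ^ 2) := by
        gcongr with i _ j _
        exacts [hM0 i j, amgm i j]
      _ = 2 * S := by
        simp only [mul_add, Finset.sum_add_distrib, hswap]
        ring
    linarith
  calc x ⬝ᵥ M *ᵥ x ≤ S := hquad
    _ = ∑ i, x i ^ 2 / w i * (M *ᵥ w) i := by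
      simp only [S, mulVec, dotProduct, Finset.mul_sum]
      exact Finset.sum_congr rfl fun i _ => Finset.sum_congr rfl fun j _ => by ring
    _ ≤ ∑ i, x i ^ 2 / w i * (c * w i) := by
      gcongr with i
      exacts [div_nonneg (sq_nonneg _) (hw i).le, hMw i]
    _ = c * ∑ i, x i ^ 2 := by
      rw [Finset.mul_sum]
      exact Finset.sum_congr rfl fun i _ => by field_simp [(hw i).ne']

section ABC

variable {n : ℕ} (G : SimpleGraph (Fin n))

theorem ABCMatrix_isSymm : (ABCMatrix G).IsSymm := by
  ext i j
  simp only [transpose_apply, ABCMatrix, G.adj_comm, add_comm, mul_comm]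

theorem ABCMatrix_nonneg (i j : Fin n) : 0 ≤ ABCMatrix G i j := by
  unfold ABCMatrix
  split_ifs
  exacts [Real.sqrt_nonneg _, le_rfl]

theorem rhoABC_le_of_mulVec_le {w : Fin n → ℝ} (hw : ∀ i, 0 < w i) {c : ℝ} (hc : 0 ≤ c)
    (hMw : ∀ i, (ABCMatrix G *ᵥ w) i ≤ c * w i) : rhoABC G ≤ c := by
  refine Real.sSup_le ?_ hc
  rintro r ⟨x, hx, rfl⟩
  simpa [hx] using
    dotProduct_mulVec_le_of_mulVec_le (ABCMatrix_isSymm G) (ABCMatrix_nonneg G) hw hMw x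

theorem ABCMatrix_mulVec_sqrt_degree (i : Fin n) :
    (ABCMatrix G *ᵥ fun j => √(G.degree j : ℝ)) i
      = (∑ j ∈ G.neighborFinset i, √((G.degree i : ℝ) + G.degree j - 2)) / √(G.degree i : ℝ) := by
  simp only [mulVec, dotProduct, ABCMatrix, ite_mul, zero_mul, ← Finset.sum_filter,
    ← SimpleGraph.neighborFinset_eq_filter, Finset.sum_div]
  refine Finset.sum_congr rfl fun j hj => ?_
  have hadj := (G.mem_neighborFinset i j).1 hj
  have hi : (1 : ℝ) ≤ G.degree i := by exact_mod_cast hadj.degree_pos_left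
  have hj : (1 : ℝ) ≤ G.degree j := by exact_mod_cast hadj.degree_pos_right
  rw [Real.sqrt_div (by linarith), Real.sqrt_mul (by linarith)]
  field_simp [Real.sqrt_pos.2 (by linarith : (0 : ℝ) < G.degree j)]

end ABC

theorem sum_sqrt_card_add_sub_two_le {ι : Type*} {s : Finset ι} {d : ℕ} (hd : #s = d)
    (f : ι → ℝ) {L : ℝ} (hL : 3 ≤ L) (hdL : (d : ℝ) ≤ L) (hf : ∀ j ∈ s, 1 ≤ f j ∧ f j ≤ L)
    (hsum : ∑ j ∈ s, f j ≤ L + 3) :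
    ∑ j ∈ s, √((d : ℝ) + f j - 2) ≤ d * √L := by
  rcases Nat.eq_zero_or_pos d with rfl | hd1
  · simp [Finset.card_eq_zero.1 hd]
  have hd1' : (1 : ℝ) ≤ d := by exact_mod_cast hd1
  have hsumL : ∑ j ∈ s, f j ≤ d * L := by
    simpa [hd] using Finset.sum_le_card_nsmul s f L fun j hj => (hf j hj).2
  have hpoly : d * (d - 2) + ∑ j ∈ s, f j ≤ d * L := by
    rcases Nat.lt_or_ge d 2 with h1 | h2
    · have h1' : (d : ℝ) = 1 := by exact_mod_cast (by omega : d = 1)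
      rw [h1'] at hsumL ⊢
      linarith
    · have h2' : (2 : ℝ) ≤ d := by exact_mod_cast h2
      nlinarith [mul_nonneg (sub_nonneg.2 h2') (sub_nonneg.2 hdL)]
  have hCS : (∑ j ∈ s, √((d : ℝ) + f j - 2)) ^ 2 ≤ d * (d * (d - 2) + ∑ j ∈ s, f j) := by
    refine (sq_sum_le_card_mul_sum_sq).trans_eq ?_
    rw [Finset.sum_congr rfl fun j hj => Real.sq_sqrt (by linarith [(hf j hj).1]),
      Finset.sum_sub_distrib, Finset.sum_add_distrib, Finset.sum_const, Finset.sum_const, hd]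
    simp only [nsmul_eq_mul]
    ring
  refine le_of_pow_le_pow_left₀ two_ne_zero (by positivity) (hCS.trans ?_)
  rw [mul_pow, Real.sq_sqrt (by linarith)]
  nlinarith

namespace SimpleGraph

variable {V : Type*} [Fintype V] (G : SimpleGraph V)

theorem sum_degree_neighborFinset_add_card_le (hG : ∀ v, 0 < G.degree v) (i : V) :
    ∑ j ∈ G.neighborFinset i, G.degree j + Fintype.card V ≤ 2 * #G.edgeFinset + 1 := by
  set N := insert i (G.neighborFinset i)
  have hi : i ∉ G.neighborFinset i := by simp
  have hN : #N = G.degree i + 1 := by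
    rw [Finset.card_insert_of_notMem hi, card_neighborFinset_eq_degree]
  have hNc : #Nᶜ ≤ ∑ j ∈ Nᶜ, G.degree j := by
    simpa using Finset.card_nsmul_le_sum Nᶜ (fun j => G.degree j) 1 fun j _ => hG j
  have := Finset.sum_add_sum_compl N fun j => G.degree j
  rw [Finset.sum_insert hi, sum_degrees_eq_twice_card_edges] at this
  have := Finset.card_add_card_compl N
  omega

variable {G} in
theorem IsTree.sum_degree_neighborFinset_add_one_le [Nontrivial V] (hG : G.IsTree) (i : V) :
    ∑ j ∈ G.neighborFinset i, G.degree j + 1 ≤ Fintype.card V := by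
  have := G.sum_degree_neighborFinset_add_card_le
    (fun v => hG.connected.preconnected.degree_pos_of_nontrivial v) i
  have := hG.card_edgeFinset
  omega

end SimpleGraph

theorem stmt17 {n : ℕ} (hn : 7 ≤ n) (T : SimpleGraph (Fin n)) (hT : T.IsTree)
    (hΔ : T.maxDegree ≤ n - 4) :
    rhoABC T ≤ Real.sqrt ((n : ℝ) - 4) := by
  have : Nontrivial (Fin n) := Fin.nontrivial_iff_two_le.2 (by omega)
  have hn' : (7 : ℝ) ≤ n := by exact_mod_cast hn
  have hdeg_pos (v : Fin n) : 0 < T.degree v :=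
    hT.connected.preconnected.degree_pos_of_nontrivial v
  have hdeg_le (v : Fin n) : (T.degree v : ℝ) ≤ n - 4 := by
    have : T.degree v + 4 ≤ n := by have := T.degree_le_maxDegree v; omega
    have : (T.degree v : ℝ) + 4 ≤ n := by exact_mod_cast this
    linarith
  have hnbr (i : Fin n) : ∑ j ∈ T.neighborFinset i, (T.degree j : ℝ) ≤ (n - 4) + 3 := by
    have := hT.sum_degree_neighborFinset_add_one_le i
    rw [Fintype.card_fin] at this
    have : ∑ j ∈ T.neighborFinset i, (T.degree j : ℝ) + 1 ≤ n := by exact_mod_cast this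
    linarith
  refine rhoABC_le_of_mulVec_le T (w := fun v => √(T.degree v : ℝ))
    (fun v => Real.sqrt_pos.2 (by exact_mod_cast hdeg_pos v)) (Real.sqrt_nonneg _) fun i => ?_
  rw [ABCMatrix_mulVec_sqrt_degree, div_le_iff₀ (Real.sqrt_pos.2 (by exact_mod_cast hdeg_pos i)),
    mul_assoc, Real.mul_self_sqrt (Nat.cast_nonneg _), mul_comm]
  exact sum_sqrt_card_add_sub_two_le (T.card_neighborFinset_eq_degree i) _
    (by linarith) (hdeg_le i)
    (fun j _ => ⟨by exact_mod_cast hdeg_pos j, hdeg_le j⟩) (hnbr i)
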